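/- Vertical composition of 2-paths is associative up to rank-2 homotopy: if g, h, k are 2-paths in M with g(1,·) = h(0,·) and h(1,·) = k(0,·), then (g·h)·k is rank-2 homotopic to g·(h·k). -/

import Mathlib

/-!
Both composites are triple concatenations of `g`, `h`, `k`, with break points `(1/4, 1/2)` for
`(g·h)·k` and `(1/2, 3/4)` for `g·(h·k)`. Sliding the break points smoothly from one pair to the
other gives the homotopy. Since `g`, `h`, `k` are constant near the boundary of the square, the
pieces agree near the seams, so the homotopy is locally `g`, `h` or `k` composed with a smooth map
to `ℝ × ℝ`: it is smooth and its differential has rank at most `2`. Its faces `s = 0` and `s = 1`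
are `t ↦ g (0, t)` and `t ↦ k (1, t)`, constant in `r`, hence rank-1 homotopies.
-/

open scoped Manifold

variable (E : Type*) [NormedAddCommGroup E] [NormedSpace ℝ E] [FiniteDimensional ℝ E]
variable {M : Type*} [TopologicalSpace M] [ChartedSpace E M]
  [IsManifold 𝓘(ℝ, E) (⊤ : ℕ∞) M]

/-- A 1-path in `M`: a smooth map `ℝ → M` that is constant near `(-∞, 0]` and near
`[1, ∞)` (in the sense of the `ε`-conditions). -/
def IsOnePath (γ : ℝ → M) : Prop :=
  ContMDiff 𝓘(ℝ, ℝ) 𝓘(ℝ, E) (⊤ : ℕ∞) γ ∧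
    ∃ ε > (0 : ℝ), (∀ t ≤ ε, γ t = γ 0) ∧ (∀ t, 1 - ε ≤ t → γ t = γ 1)

/-- A 2-path in `M`, as a smooth map `ℝ × ℝ → M` with coordinates `(s, t)`,
constant near the boundary in each variable, whose images at `t = 0` and `t = 1`
are single points. -/
def IsTwoPath (g : ℝ × ℝ → M) : Prop :=
  ContMDiff 𝓘(ℝ, ℝ × ℝ) 𝓘(ℝ, E) (⊤ : ℕ∞) g ∧
    (∃ ε > (0 : ℝ),
      (∀ s t, s ≤ ε → g (s, t) = g (0, t)) ∧
      (∀ s t, 1 - ε ≤ s → g (s, t) = g (1, t)) ∧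
      (∀ s t, t ≤ ε → g (s, t) = g (s, 0)) ∧
      (∀ s t, 1 - ε ≤ t → g (s, t) = g (s, 1))) ∧
    (∀ s s', g (s, 0) = g (s', 0)) ∧ (∀ s s', g (s, 1) = g (s', 1))

/-- A rank-1 homotopy: a 2-path whose differential has rank at most 1 at every point. -/
def IsRank1Homotopy (h : ℝ × ℝ → M) : Prop :=
  IsTwoPath E h ∧
    ∀ p : ℝ × ℝ,
      Module.finrank ℝ
        (LinearMap.range (mfderiv 𝓘(ℝ, ℝ × ℝ) 𝓘(ℝ, E) h p).toLinearMap) ≤ 1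

/-- Two 1-paths are rank-1 homotopic if they are joined by a rank-1 homotopy. -/
def Rank1Homotopic (γ γ' : ℝ → M) : Prop :=
  ∃ h : ℝ × ℝ → M, IsRank1Homotopy E h ∧ (∀ t, h (0, t) = γ t) ∧ (∀ t, h (1, t) = γ' t)

/-- A 3-path in `M`, as a smooth map `ℝ × ℝ × ℝ → M` with coordinates `(r, s, t)`. -/
def IsThreePath (α : ℝ × ℝ × ℝ → M) : Prop :=
  ContMDiff 𝓘(ℝ, ℝ × ℝ × ℝ) 𝓘(ℝ, E) (⊤ : ℕ∞) α ∧
    (∃ ε > (0 : ℝ),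
      (∀ r s t, r ≤ ε → α (r, s, t) = α (0, s, t)) ∧
      (∀ r s t, 1 - ε ≤ r → α (r, s, t) = α (1, s, t)) ∧
      (∀ r s t, s ≤ ε → α (r, s, t) = α (r, 0, t)) ∧
      (∀ r s t, 1 - ε ≤ s → α (r, s, t) = α (r, 1, t)) ∧
      (∀ r s t, t ≤ ε → α (r, s, t) = α (r, s, 0)) ∧
      (∀ r s t, 1 - ε ≤ t → α (r, s, t) = α (r, s, 1))) ∧
    (∀ r s r' s', α (r, s, 0) = α (r', s', 0)) ∧
    (∀ r s r' s', α (r, s, 1) = α (r', s', 1))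

/-- A rank-2 homotopy: a 3-path whose differential has rank at most 2 at every point and
whose restrictions to `s = 0` and `s = 1` are rank-1 homotopies. -/
def IsRank2Homotopy (α : ℝ × ℝ × ℝ → M) : Prop :=
  IsThreePath E α ∧
    (∀ p : ℝ × ℝ × ℝ,
      Module.finrank ℝ
        (LinearMap.range (mfderiv 𝓘(ℝ, ℝ × ℝ × ℝ) 𝓘(ℝ, E) α p).toLinearMap) ≤ 2) ∧
    IsRank1Homotopy E (fun p : ℝ × ℝ => α (p.1, 0, p.2)) ∧
    IsRank1Homotopy E (fun p : ℝ × ℝ => α (p.1, 1, p.2))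

/-- `α` is a rank-2 homotopy from the 2-path `g` to the 2-path `g'`. -/
def Rank2HomotopyFrom (α : ℝ × ℝ × ℝ → M) (g g' : ℝ × ℝ → M) : Prop :=
  IsRank2Homotopy E α ∧ (∀ s t, α (0, s, t) = g (s, t)) ∧ (∀ s t, α (1, s, t) = g' (s, t))

/-- Two 2-paths are rank-2 homotopic if they are joined by a rank-2 homotopy. -/
def Rank2Homotopic (g g' : ℝ × ℝ → M) : Prop :=
  ∃ α : ℝ × ℝ × ℝ → M, Rank2HomotopyFrom E α g g'

/-- Vertical composition of 2-paths. -/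
noncomputable def vertComp (g h : ℝ × ℝ → M) : ℝ × ℝ → M := fun p =>
  if p.1 ≤ 1 / 2 then g (2 * p.1, p.2) else h (2 * p.1 - 1, p.2)

open Filter Topology

section Concatenation

variable {Y : Type*}

def IsFlatCollar (ε : ℝ) (g : ℝ × ℝ → Y) : Prop :=
  (∀ s t, s ≤ ε → g (s, t) = g (0, t)) ∧ (∀ s t, 1 - ε ≤ s → g (s, t) = g (1, t)) ∧
    (∀ s t, t ≤ ε → g (s, t) = g (s, 0)) ∧ (∀ s t, 1 - ε ≤ t → g (s, t) = g (s, 1))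

theorem IsFlatCollar.mono {ε ε' : ℝ} {g : ℝ × ℝ → Y} (hg : IsFlatCollar ε g) (hε : ε' ≤ ε) :
    IsFlatCollar ε' g :=
  ⟨fun s t hs => hg.1 s t (hs.trans hε), fun s t hs => hg.2.1 s t (by linarith),
    fun s t ht => hg.2.2.1 s t (ht.trans hε), fun s t ht => hg.2.2.2 s t (by linarith)⟩

noncomputable def vertComp3 (a b : ℝ) (g h k : ℝ × ℝ → Y) : ℝ × ℝ → Y := fun p =>
  if p.1 ≤ a then g (p.1 / a, p.2)
  else if p.1 ≤ b then h ((p.1 - a) / (b - a), p.2)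
  else k ((p.1 - b) / (1 - b), p.2)

variable {a b ε s t : ℝ} {g h k : ℝ × ℝ → Y}

theorem vertComp3_zero_fst (ha : 0 ≤ a) : vertComp3 a b g h k (0, t) = g (0, t) := by
  simp [vertComp3, ha]

theorem vertComp3_one_fst (hab : a < b) (hb : b < 1) : vertComp3 a b g h k (1, t) = k (1, t) := by
  simp [vertComp3, (hab.trans hb).not_ge, hb.not_ge, div_self (sub_pos.2 hb).ne']

theorem vertComp3_eq_left (ha : 0 < a) (hab : a < b) (hε : 0 ≤ ε) (hε1 : ε ≤ 1)
    (cg : IsFlatCollar ε g) (ch : IsFlatCollar ε h) (hgh : ∀ t, g (1, t) = h (0, t))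
    (hs : s < a + ε * (b - a)) : vertComp3 a b g h k (s, t) = g (s / a, t) := by
  have hs' : s ≤ b := by nlinarith
  by_cases hsa : s ≤ a
  · simp [vertComp3, hsa]
  rw [not_le] at hsa
  have hg1 : g (s / a, t) = g (1, t) := cg.2.1 _ _ (by rw [le_div_iff₀ ha]; nlinarith)
  have hh0 : h ((s - a) / (b - a), t) = h (0, t) :=
    ch.1 _ _ (by rw [div_le_iff₀ (sub_pos.2 hab)]; linarith)
  simp only [vertComp3, hsa.not_ge, hs', if_false, if_true, hh0, hg1, hgh]

theorem vertComp3_eq_mid (ha : 0 < a) (hab : a < b) (hε : 0 ≤ ε)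
    (cg : IsFlatCollar ε g) (ch : IsFlatCollar ε h) (ck : IsFlatCollar ε k)
    (hgh : ∀ t, g (1, t) = h (0, t)) (hhk : ∀ t, h (1, t) = k (0, t))
    (hs₁ : (1 - ε) * a < s) (hs₂ : s < b + ε * (1 - b)) :
    vertComp3 a b g h k (s, t) = h ((s - a) / (b - a), t) := by
  have hba : 0 < b - a := sub_pos.2 hab
  by_cases hsa : s ≤ a
  · have hg1 : g (s / a, t) = g (1, t) := cg.2.1 _ _ (by rw [le_div_iff₀ ha]; linarith)
    have hh0 : h ((s - a) / (b - a), t) = h (0, t) :=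
      ch.1 _ _ (by rw [div_le_iff₀ hba]; nlinarith)
    simp only [vertComp3, hsa, if_true, hg1, hh0, hgh]
  by_cases hsb : s ≤ b
  · simp [vertComp3, hsa, hsb]
  rw [not_le] at hsa hsb
  have hh1 : h ((s - a) / (b - a), t) = h (1, t) := ch.2.1 _ _ (by rw [le_div_iff₀ hba]; nlinarith)
  have hk0 : k ((s - b) / (1 - b), t) = k (0, t) :=
    ck.1 _ _ (by rw [div_le_iff₀ (by nlinarith)]; linarith)
  simp only [vertComp3, hsa.not_ge, hsb.not_ge, if_false, hh1, hk0, hhk]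

theorem vertComp3_eq_right (hab : a < b) (hb : b < 1) (hε : 0 ≤ ε) (hε1 : ε ≤ 1)
    (ch : IsFlatCollar ε h) (ck : IsFlatCollar ε k) (hhk : ∀ t, h (1, t) = k (0, t))
    (hs : b - ε * (b - a) < s) : vertComp3 a b g h k (s, t) = k ((s - b) / (1 - b), t) := by
  have hsa : a < s := by nlinarith
  by_cases hsb : s ≤ b
  · have hh1 : h ((s - a) / (b - a), t) = h (1, t) :=
      ch.2.1 _ _ (by rw [le_div_iff₀ (sub_pos.2 hab)]; linarith)
    have hk0 : k ((s - b) / (1 - b), t) = k (0, t) :=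
      ck.1 _ _ ((div_nonpos_of_nonpos_of_nonneg (by linarith) (by linarith)).trans hε)
    simp only [vertComp3, hsa.not_ge, hsb, if_false, if_true, hh1, hk0, hhk]
  · simp [vertComp3, hsa.not_ge, hsb]

theorem vertComp3_eq_of_fst_le (ha : 0 < a) (hε1 : ε ≤ 1) (cg : IsFlatCollar ε g)
    (hs : s ≤ ε * a) : vertComp3 a b g h k (s, t) = g (0, t) := by
  have hsa : s ≤ a := hs.trans (by nlinarith)
  simp only [vertComp3, hsa, if_true]
  exact cg.1 _ _ (by rwa [div_le_iff₀ ha])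

theorem vertComp3_eq_of_le_fst (hab : a < b) (hb : b < 1) (hε1 : ε < 1)
    (ck : IsFlatCollar ε k) (hs : 1 - ε * (1 - b) ≤ s) :
    vertComp3 a b g h k (s, t) = k (1, t) := by
  have hsb : b < s := by nlinarith
  simp only [vertComp3, (hab.trans hsb).not_ge, hsb.not_ge, if_false]
  exact ck.2.1 _ _ (by rw [le_div_iff₀ (sub_pos.2 hb)]; linarith)

theorem vertComp3_eq_of_snd_le (cg : IsFlatCollar ε g) (ch : IsFlatCollar ε h)
    (ck : IsFlatCollar ε k) (ht : t ≤ ε) :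
    vertComp3 a b g h k (s, t) = vertComp3 a b g h k (s, 0) := by
  simp only [vertComp3]
  split_ifs
  exacts [cg.2.2.1 _ _ ht, ch.2.2.1 _ _ ht, ck.2.2.1 _ _ ht]

theorem vertComp3_eq_of_le_snd (cg : IsFlatCollar ε g) (ch : IsFlatCollar ε h)
    (ck : IsFlatCollar ε k) (ht : 1 - ε ≤ t) :
    vertComp3 a b g h k (s, t) = vertComp3 a b g h k (s, 1) := by
  simp only [vertComp3]
  split_ifs
  exacts [cg.2.2.2 _ _ ht, ch.2.2.2 _ _ ht, ck.2.2.2 _ _ ht]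

theorem vertComp3_eq_of_const_edge (hgh : ∀ t, g (1, t) = h (0, t))
    (hhk : ∀ t, h (1, t) = k (0, t)) (hg : ∀ s s', g (s, t) = g (s', t))
    (hh : ∀ s s', h (s, t) = h (s', t)) (hk : ∀ s s', k (s, t) = k (s', t)) :
    vertComp3 a b g h k (s, t) = g (0, t) := by
  simp only [vertComp3]
  split_ifs
  · exact hg _ _
  · rw [hh _ 0, ← hgh, hg]
  · rw [hk _ 0, ← hhk, hh _ 0, ← hgh, hg]

theorem vertComp3_quarter_half (g h k : ℝ × ℝ → Y) :
    vertComp3 (1 / 4) (1 / 2) g h k = vertComp (vertComp g h) k := by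
  funext p
  simp only [vertComp3, vertComp]
  split_ifs <;> first | (congr 1; ext <;> simp only <;> ring) | (exfalso; linarith)

theorem vertComp3_half_threeQuarters (g h k : ℝ × ℝ → Y) :
    vertComp3 (1 / 2) (3 / 4) g h k = vertComp g (vertComp h k) := by
  funext p
  simp only [vertComp3, vertComp]
  split_ifs <;> first | (congr 1; ext <;> simp only <;> ring) | (exfalso; linarith)

noncomputable def assocBreak (r : ℝ) : ℝ := (1 + Real.smoothTransition (3 * r - 1)) / 4

theorem contDiff_assocBreak : ContDiff ℝ (⊤ : ℕ∞) assocBreak :=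
  (contDiff_const.add (Real.smoothTransition.contDiff.comp (by fun_prop))).div_const 4

theorem quarter_le_assocBreak (r : ℝ) : 1 / 4 ≤ assocBreak r := by
  have := Real.smoothTransition.nonneg (3 * r - 1)
  unfold assocBreak
  linarith

theorem assocBreak_le_half (r : ℝ) : assocBreak r ≤ 1 / 2 := by
  have := Real.smoothTransition.le_one (3 * r - 1)
  unfold assocBreak
  linarith

theorem assocBreak_of_le {r : ℝ} (hr : r ≤ 1 / 3) : assocBreak r = 1 / 4 := by
  simp [assocBreak, Real.smoothTransition.zero_of_nonpos (by linarith : 3 * r - 1 ≤ 0)]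

theorem assocBreak_of_ge {r : ℝ} (hr : 2 / 3 ≤ r) : assocBreak r = 1 / 2 := by
  rw [assocBreak, Real.smoothTransition.one_of_one_le (by linarith)]
  norm_num

noncomputable def assocHomotopy (g h k : ℝ × ℝ → Y) : ℝ × ℝ × ℝ → Y := fun p =>
  vertComp3 (assocBreak p.1) (assocBreak p.1 + 1 / 4) g h k p.2

theorem assocHomotopy_zero (g h k : ℝ × ℝ → Y) (p : ℝ × ℝ) :
    assocHomotopy g h k (0, p) = vertComp (vertComp g h) k p := by
  rw [← vertComp3_quarter_half, assocHomotopy, assocBreak_of_le (by norm_num)]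
  norm_num

theorem assocHomotopy_one (g h k : ℝ × ℝ → Y) (p : ℝ × ℝ) :
    assocHomotopy g h k (1, p) = vertComp g (vertComp h k) p := by
  rw [← vertComp3_half_threeQuarters, assocHomotopy, assocBreak_of_ge (by norm_num)]
  norm_num

end Concatenation

section Smooth

def LocallyFactorsThrough (H F : Type*) [NormedAddCommGroup H] [NormedSpace ℝ H]
    [NormedAddCommGroup F] [NormedSpace ℝ F] {N : Type*} [TopologicalSpace N] [ChartedSpace H N]
    {V : Type*} [NormedAddCommGroup V] [NormedSpace ℝ V] (f : V → N) : Prop :=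
  ∀ p, ∃ (φ : F → N) (q : V → F), ContMDiff 𝓘(ℝ, F) 𝓘(ℝ, H) (⊤ : ℕ∞) φ ∧
    ContDiff ℝ (⊤ : ℕ∞) q ∧ f =ᶠ[𝓝 p] φ ∘ q

variable {H : Type*} [NormedAddCommGroup H] [NormedSpace ℝ H] {N : Type*} [TopologicalSpace N]
  [ChartedSpace H N] {g h k : ℝ × ℝ → N}

variable {F V : Type*} [NormedAddCommGroup F] [NormedSpace ℝ F] [NormedAddCommGroup V]
  [NormedSpace ℝ V] {f : V → N}

theorem LocallyFactorsThrough.contMDiff (hf : LocallyFactorsThrough H F f) :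
    ContMDiff 𝓘(ℝ, V) 𝓘(ℝ, H) (⊤ : ℕ∞) f := fun p => by
  obtain ⟨φ, q, hφ, hq, hfq⟩ := hf p
  exact (hφ.comp (contMDiff_iff_contDiff.2 hq)).contMDiffAt.congr_of_eventuallyEq hfq

theorem LocallyFactorsThrough.finrank_range_mfderiv_le [FiniteDimensional ℝ F]
    (hf : LocallyFactorsThrough H F f) (p : V) :
    Module.finrank ℝ (LinearMap.range (mfderiv 𝓘(ℝ, V) 𝓘(ℝ, H) f p).toLinearMap) ≤
      Module.finrank ℝ F := by
  obtain ⟨φ, q, hφ, hq, hfq⟩ := hf p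
  have hq' : ContMDiff 𝓘(ℝ, V) 𝓘(ℝ, F) (⊤ : ℕ∞) q := contMDiff_iff_contDiff.2 hq
  rw [hfq.mfderiv_eq, mfderiv_comp p (hφ.mdifferentiableAt (by simp))
    (hq'.mdifferentiableAt (by simp))]
  set A : F →L[ℝ] H := mfderiv 𝓘(ℝ, F) 𝓘(ℝ, H) φ (q p)
  set B : V →L[ℝ] F := mfderiv 𝓘(ℝ, V) 𝓘(ℝ, F) q p
  change Module.finrank ℝ (LinearMap.range ((A : F →ₗ[ℝ] H) ∘ₗ (B : V →ₗ[ℝ] F))) ≤ _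
  exact (Submodule.finrank_mono (LinearMap.range_comp_le_range _ _)).trans
    (LinearMap.finrank_range_le _)

theorem IsOnePath.isRank1Homotopy_comp_snd {γ : ℝ → N} (hγ : IsOnePath H γ) :
    IsRank1Homotopy H (fun p : ℝ × ℝ => γ p.2) := by
  obtain ⟨hsmooth, ε, hε, h0, h1⟩ := hγ
  have hf : LocallyFactorsThrough H ℝ (fun p : ℝ × ℝ => γ p.2) :=
    fun _ => ⟨γ, Prod.snd, hsmooth, contDiff_snd, .rfl⟩
  refine ⟨⟨hf.contMDiff, ⟨ε, hε, fun _ _ _ => rfl, fun _ _ _ => rfl, fun _ t ht => h0 t ht,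
    fun _ t ht => h1 t ht⟩, fun _ _ => rfl, fun _ _ => rfl⟩, fun p => ?_⟩
  simpa using hf.finrank_range_mfderiv_le p

theorem IsTwoPath.isOnePath_slice (hg : IsTwoPath H g) (s : ℝ) :
    IsOnePath H (fun t => g (s, t)) := by
  obtain ⟨hsmooth, ⟨ε, hε, -, -, h0, h1⟩, -⟩ := hg
  exact ⟨hsmooth.comp (contMDiff_iff_contDiff.2 (contDiff_const.prodMk contDiff_id)),
    ε, hε, fun t ht => h0 s t ht, fun t ht => h1 s t ht⟩

theorem IsTwoPath.eventually_isFlatCollar (hg : IsTwoPath H g) :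
    ∀ᶠ ε in 𝓝[>] 0, IsFlatCollar ε g := by
  obtain ⟨-, ⟨ε, hε, hcollar⟩, -⟩ := hg
  exact eventually_of_mem (Ioo_mem_nhdsGT hε) fun _ hε' => IsFlatCollar.mono hcollar hε'.2.le

theorem locallyFactorsThrough_vertComp3 {X : Type*} [NormedAddCommGroup X] [NormedSpace ℝ X]
    {a b : X → ℝ} (ha : ContDiff ℝ (⊤ : ℕ∞) a) (hb : ContDiff ℝ (⊤ : ℕ∞) b)
    (ha0 : ∀ x, 0 < a x) (hab : ∀ x, a x < b x) (hb1 : ∀ x, b x < 1)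
    (hg : IsTwoPath H g) (hh : IsTwoPath H h) (hk : IsTwoPath H k)
    (hgh : ∀ t, g (1, t) = h (0, t)) (hhk : ∀ t, h (1, t) = k (0, t)) :
    LocallyFactorsThrough H (ℝ × ℝ)
      (fun p : X × ℝ × ℝ => vertComp3 (a p.1) (b p.1) g h k p.2) := by
  obtain ⟨ε, ⟨cg, ch, ck⟩, hε⟩ := ((hg.eventually_isFlatCollar.and
    (hh.eventually_isFlatCollar.and hk.eventually_isFlatCollar)).and
    (Ioo_mem_nhdsGT one_pos)).exists
  have hca := ha.continuous
  have hcb := hb.continuous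
  rintro ⟨x, s, t⟩
  have := ha0 x
  have := hab x
  have := hb1 x
  rcases le_or_gt s (a x) with hsa | hsa
  · refine ⟨g, fun p => (p.2.1 / a p.1, p.2.2), hg.1,
      by fun_prop (disch := exact fun p => (ha0 p.1).ne'), ?_⟩
    have hU : ∀ᶠ p : X × ℝ × ℝ in 𝓝 (x, s, t), p.2.1 < a p.1 + ε * (b p.1 - a p.1) :=
      ContinuousAt.eventually_lt (by fun_prop) (by fun_prop) (by dsimp; nlinarith)
    filter_upwards [hU] with p hp
    exact vertComp3_eq_left (ha0 _) (hab _) hε.1.le hε.2.le cg ch hgh hp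
  rcases le_or_gt s (b x) with hsb | hsb
  · refine ⟨h, fun p => ((p.2.1 - a p.1) / (b p.1 - a p.1), p.2.2), hh.1,
      by fun_prop (disch := exact fun p => (sub_pos.2 (hab p.1)).ne'), ?_⟩
    have hU₁ : ∀ᶠ p : X × ℝ × ℝ in 𝓝 (x, s, t), (1 - ε) * a p.1 < p.2.1 :=
      ContinuousAt.eventually_lt (by fun_prop) (by fun_prop) (by dsimp; nlinarith)
    have hU₂ : ∀ᶠ p : X × ℝ × ℝ in 𝓝 (x, s, t), p.2.1 < b p.1 + ε * (1 - b p.1) :=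
      ContinuousAt.eventually_lt (by fun_prop) (by fun_prop) (by dsimp; nlinarith)
    filter_upwards [hU₁, hU₂] with p hp₁ hp₂
    exact vertComp3_eq_mid (ha0 _) (hab _) hε.1.le cg ch ck hgh hhk hp₁ hp₂
  · refine ⟨k, fun p => ((p.2.1 - b p.1) / (1 - b p.1), p.2.2), hk.1,
      by fun_prop (disch := exact fun p => (sub_pos.2 (hb1 p.1)).ne'), ?_⟩
    have hU : ∀ᶠ p : X × ℝ × ℝ in 𝓝 (x, s, t), b p.1 - ε * (b p.1 - a p.1) < p.2.1 :=
      ContinuousAt.eventually_lt (by fun_prop) (by fun_prop) (by dsimp; nlinarith)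
    filter_upwards [hU] with p hp
    exact vertComp3_eq_right (hab _) (hb1 _) hε.1.le hε.2.le ch ck hhk hp

theorem locallyFactorsThrough_assocHomotopy (hg : IsTwoPath H g) (hh : IsTwoPath H h)
    (hk : IsTwoPath H k) (hgh : ∀ t, g (1, t) = h (0, t)) (hhk : ∀ t, h (1, t) = k (0, t)) :
    LocallyFactorsThrough H (ℝ × ℝ) (assocHomotopy g h k) :=
  locallyFactorsThrough_vertComp3 contDiff_assocBreak (contDiff_assocBreak.add contDiff_const)
    (fun r => by linarith [quarter_le_assocBreak r]) (fun r => by linarith)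
    (fun r => by linarith [assocBreak_le_half r]) hg hh hk hgh hhk

theorem isThreePath_assocHomotopy (hg : IsTwoPath H g) (hh : IsTwoPath H h)
    (hk : IsTwoPath H k) (hgh : ∀ t, g (1, t) = h (0, t)) (hhk : ∀ t, h (1, t) = k (0, t)) :
    IsThreePath H (assocHomotopy g h k) := by
  obtain ⟨ε, ⟨cg, ch, ck⟩, hε⟩ := ((hg.eventually_isFlatCollar.and
    (hh.eventually_isFlatCollar.and hk.eventually_isFlatCollar)).and
    (Ioo_mem_nhdsGT (by norm_num : (0 : ℝ) < 1 / 3))).exists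
  have ha := quarter_le_assocBreak
  have hb := assocBreak_le_half
  refine ⟨(locallyFactorsThrough_assocHomotopy hg hh hk hgh hhk).contMDiff,
    ⟨ε / 4, by linarith [hε.1], fun r s t hr => ?_, fun r s t hr => ?_, fun r s t hs => ?_,
      fun r s t hs => ?_, fun r s t ht => ?_, fun r s t ht => ?_⟩,
    fun r s r' s' => ?_, fun r s r' s' => ?_⟩
  · simp only [assocHomotopy, assocBreak_of_le (by linarith : r ≤ 1 / 3),
      assocBreak_of_le (by norm_num : (0 : ℝ) ≤ 1 / 3)]
  · simp only [assocHomotopy, assocBreak_of_ge (by linarith : 2 / 3 ≤ r),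
      assocBreak_of_ge (by norm_num : 2 / 3 ≤ (1 : ℝ))]
  · simp only [assocHomotopy]
    rw [vertComp3_eq_of_fst_le (by linarith [ha r]) (by linarith) cg (by nlinarith [ha r]),
      vertComp3_zero_fst (by linarith [ha r])]
  · simp only [assocHomotopy]
    rw [vertComp3_eq_of_le_fst (by linarith) (by linarith [hb r]) (by linarith) ck
      (by nlinarith [hb r]), vertComp3_one_fst (by linarith) (by linarith [hb r])]
  · exact vertComp3_eq_of_snd_le cg ch ck (by linarith)
  · exact vertComp3_eq_of_le_snd cg ch ck (by linarith)
  · simp only [assocHomotopy]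
    rw [vertComp3_eq_of_const_edge hgh hhk hg.2.2.1 hh.2.2.1 hk.2.2.1,
      vertComp3_eq_of_const_edge hgh hhk hg.2.2.1 hh.2.2.1 hk.2.2.1]
  · simp only [assocHomotopy]
    rw [vertComp3_eq_of_const_edge hgh hhk hg.2.2.2 hh.2.2.2 hk.2.2.2,
      vertComp3_eq_of_const_edge hgh hhk hg.2.2.2 hh.2.2.2 hk.2.2.2]

theorem isRank2Homotopy_assocHomotopy (hg : IsTwoPath H g) (hh : IsTwoPath H h)
    (hk : IsTwoPath H k) (hgh : ∀ t, g (1, t) = h (0, t)) (hhk : ∀ t, h (1, t) = k (0, t)) :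
    IsRank2Homotopy H (assocHomotopy g h k) := by
  have face₀ : (fun p : ℝ × ℝ => assocHomotopy g h k (p.1, 0, p.2)) = fun p => g (0, p.2) :=
    funext fun p => vertComp3_zero_fst (by linarith [quarter_le_assocBreak p.1])
  have face₁ : (fun p : ℝ × ℝ => assocHomotopy g h k (p.1, 1, p.2)) = fun p => k (1, p.2) :=
    funext fun p => vertComp3_one_fst (by linarith) (by linarith [assocBreak_le_half p.1])
  refine ⟨isThreePath_assocHomotopy hg hh hk hgh hhk, fun p => ?_,
    face₀ ▸ (hg.isOnePath_slice 0).isRank1Homotopy_comp_snd,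
    face₁ ▸ (hk.isOnePath_slice 1).isRank1Homotopy_comp_snd⟩
  simpa using (locallyFactorsThrough_assocHomotopy hg hh hk hgh hhk).finrank_range_mfderiv_le p

end Smooth

/-- Vertical composition of 2-paths is associative up to rank-2 homotopy. -/
theorem vertComp_assoc_rank2Homotopic (g h k : ℝ × ℝ → M)
    (hg : IsTwoPath E g) (hh : IsTwoPath E h) (hk : IsTwoPath E k)
    (hgh : ∀ t, g (1, t) = h (0, t)) (hhk : ∀ t, h (1, t) = k (0, t)) :
    Rank2Homotopic E (vertComp (vertComp g h) k) (vertComp g (vertComp h k)) :=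
  ⟨assocHomotopy g h k, isRank2Homotopy_assocHomotopy hg hh hk hgh hhk,
    fun s t => assocHomotopy_zero g h k (s, t), fun s t => assocHomotopy_one g h k (s, t)⟩
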